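/- Let Λ be an (n−1)-Auslander algebra with global dimension n and S a projective simple Λ-module. Then Hom_Λ(I^0(Λ), S) ≠ 0 if and only if S is injective; and Hom_Λ(I^0(Λ), S) = 0 if and only if id_Λ S = n. -/

import Mathlib

open CategoryTheory Limits

noncomputable section

namespace Paper

variable (Λ : Type) [Ring Λ]

/-- The `i`-th Ext group (as a `ℤ`-module) between two `Λ`-modules. -/
abbrev ext (M N : ModuleCat.{0} Λ) (i : ℕ) : ModuleCat ℤ :=
  ((Ext ℤ (ModuleCat.{0} Λ) i).obj (Opposite.op M)).obj N

variable {Λ}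

/-- `Ext^i(M,N) = 0`. -/
def extZero (M N : ModuleCat.{0} Λ) (i : ℕ) : Prop :=
  Subsingleton (ext Λ M N i)

variable (Λ)

/-- projective dimension at most `n` (via Ext-vanishing beyond `n`). -/
def pdLE (M : ModuleCat.{0} Λ) (n : ℕ) : Prop :=
  ∀ N : ModuleCat.{0} Λ, ∀ i, n < i → extZero M N i

/-- projective dimension exactly `n`. -/
def pdEq (M : ModuleCat.{0} Λ) (n : ℕ) : Prop :=
  pdLE Λ M n ∧ ∀ m : ℕ, pdLE Λ M m → n ≤ m

/-- injective dimension at most `n`. -/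
def idLE (M : ModuleCat.{0} Λ) (n : ℕ) : Prop :=
  ∀ N : ModuleCat.{0} Λ, ∀ i, n < i → extZero N M i

/-- injective dimension exactly `n`. -/
def idEq (M : ModuleCat.{0} Λ) (n : ℕ) : Prop :=
  idLE Λ M n ∧ ∀ m : ℕ, idLE Λ M m → n ≤ m

/-- global dimension at most `n`. -/
def glDimLE (n : ℕ) : Prop := ∀ M : ModuleCat.{0} Λ, pdLE Λ M n

/-- global dimension exactly `n`. -/
def glDimEq (n : ℕ) : Prop := glDimLE Λ n ∧ ∀ m : ℕ, glDimLE Λ m → n ≤ m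

/-- An essential submodule: it meets every nonzero submodule nontrivially. -/
def Essential {M : Type} [AddCommGroup M] [Module Λ M] (K : Submodule Λ M) : Prop :=
  ∀ L : Submodule Λ M, L ≠ ⊥ → K ⊓ L ≠ ⊥

/-- A minimal injective resolution `0 → M → I⁰ → I¹ → ⋯`. -/
structure MinInjRes (M : ModuleCat.{0} Λ) where
  I : ℕ → ModuleCat.{0} Λ
  ι : M ⟶ I 0
  d : ∀ i : ℕ, I i ⟶ I (i + 1)
  injective : ∀ i, Injective (I i)
  mono_ι : Function.Injective ι
  exact_ι : LinearMap.range ι.hom = LinearMap.ker (d 0).hom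
  exact_d : ∀ i, LinearMap.range (d i).hom = LinearMap.ker (d (i + 1)).hom
  ess_ι : Essential Λ (LinearMap.range ι.hom)
  ess_d : ∀ i, Essential Λ (LinearMap.range (d i).hom)

/-- A (superfluous-kernel, i.e. minimal) projective resolution `⋯ → P₁ → P₀ → M → 0`. -/
structure MinProjRes (M : ModuleCat.{0} Λ) where
  P : ℕ → ModuleCat.{0} Λ
  π : P 0 ⟶ M
  d : ∀ i : ℕ, P (i + 1) ⟶ P i
  projective : ∀ i, Projective (P i)
  epi_π : Function.Surjective π
  exact_π : LinearMap.range (d 0).hom = LinearMap.ker π.hom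
  exact_d : ∀ i, LinearMap.range (d (i + 1)).hom = LinearMap.ker (d i).hom
  small_π : ∀ K : Submodule Λ (P 0), K ⊔ LinearMap.ker π.hom = ⊤ → K = ⊤
  small_d : ∀ i, ∀ K : Submodule Λ (P (i + 1)), K ⊔ LinearMap.ker (d i).hom = ⊤ → K = ⊤

/-- Flat dimension at most `n` (for Artin algebras flat = projective on these terms):
a resolution by projective (= flat) modules vanishing beyond degree `n`. -/
def fdLE (M : ModuleCat.{0} Λ) (n : ℕ) : Prop :=
  ∃ (F : ℕ → ModuleCat.{0} Λ) (π : F 0 ⟶ M) (d : ∀ i : ℕ, F (i + 1) ⟶ F i),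
    (∀ i, Projective (F i)) ∧ Function.Surjective π ∧
    LinearMap.range (d 0).hom = LinearMap.ker π.hom ∧
    (∀ i, LinearMap.range (d (i + 1)).hom = LinearMap.ker (d i).hom) ∧
    (∀ i, n < i → Subsingleton (F i))

/-- A maximal `n`-orthogonal subcategory of `mod Λ`. -/
def MaxOrthogonal (n : ℕ) (C : Set (ModuleCat.{0} Λ)) : Prop :=
  (∀ M ∈ C, Module.Finite Λ M) ∧
  -- covariantly finite
  (∀ M : ModuleCat.{0} Λ, Module.Finite Λ M →
    ∃ C₀ ∈ C, ∃ f : M ⟶ C₀, ∀ C' ∈ C, ∀ g : M ⟶ C', ∃ h : C₀ ⟶ C', f ≫ h = g) ∧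
  -- contravariantly finite
  (∀ M : ModuleCat.{0} Λ, Module.Finite Λ M →
    ∃ C₀ ∈ C, ∃ f : C₀ ⟶ M, ∀ C' ∈ C, ∀ g : C' ⟶ M, ∃ h : C' ⟶ C₀, h ≫ f = g) ∧
  -- C = ⊥ₙC
  (∀ M : ModuleCat.{0} Λ, Module.Finite Λ M →
    (M ∈ C ↔ ∀ C' ∈ C, ∀ i, 1 ≤ i → i ≤ n → extZero M C' i)) ∧
  -- C = C⊥ₙ
  (∀ M : ModuleCat.{0} Λ, Module.Finite Λ M →
    (M ∈ C ↔ ∀ C' ∈ C, ∀ i, 1 ≤ i → i ≤ n → extZero C' M i))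

/-- `E` is a finitely generated injective cogenerator (the role of `D(Λ^op)`). -/
def IsInjCogen (E : ModuleCat.{0} Λ) : Prop :=
  Module.Finite Λ E ∧ Injective E ∧
    ∀ M : ModuleCat.{0} Λ, Module.Finite Λ M →
      ∃ (k : ℕ) (f : M ⟶ ModuleCat.of Λ (Fin k → E)), Function.Injective f


/-- `M` is an indecomposable module. -/
def Indec (M : ModuleCat.{0} Λ) : Prop :=
  Nontrivial M ∧ ∀ Y Z : ModuleCat.{0} Λ, Nonempty (M ≅ Y ⊞ Z) → Subsingleton Y ∨ Subsingleton Z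

/-- `X` belongs to `add M`: `X` is a direct summand of a finite direct sum of copies of `M`. -/
def memAdd (M X : ModuleCat.{0} Λ) : Prop :=
  ∃ (k : ℕ) (Z : ModuleCat.{0} Λ), Nonempty (ModuleCat.of Λ (Fin k → ↥M) ≅ X ⊞ Z)

/-- `M` has no nonzero projective direct summands. -/
def NoProjSummand (M : ModuleCat.{0} Λ) : Prop :=
  ∀ P Z : ModuleCat.{0} Λ, Nonempty (M ≅ P ⊞ Z) → Projective P → Subsingleton P

/-- `Λ` is an almost hereditary algebra: `gl.dim Λ ≤ 2` and every (f.g.) indecomposable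
module has projective dimension at most 1 or injective dimension at most 1. -/
def AlmostHereditary : Prop :=
  glDimLE Λ 2 ∧ ∀ M : ModuleCat.{0} Λ, Module.Finite Λ M → Indec Λ M →
    pdLE Λ M 1 ∨ idLE Λ M 1

/-- `X` has a finite resolution `0 → C_m → ⋯ → C_0 → X → 0` with all `C_i ∈ add T`. -/
def FinResByAdd (T X : ModuleCat.{0} Λ) : Prop :=
  ∃ (m : ℕ) (Cc : ℕ → ModuleCat.{0} Λ) (π : Cc 0 ⟶ X) (d : ∀ i : ℕ, Cc (i + 1) ⟶ Cc i),
    (∀ i ≤ m, memAdd Λ T (Cc i)) ∧ Function.Surjective π ∧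
    LinearMap.range (d 0).hom = LinearMap.ker π.hom ∧
    (∀ i, LinearMap.range (d (i + 1)).hom = LinearMap.ker (d i).hom) ∧
    (∀ i, m < i → Subsingleton (Cc i))

/-- `T` is a cotilting module: finite injective dimension, self-orthogonal, and the
injective cogenerator `D(Λ^op)` has a finite `add T`-resolution. -/
def Cotilting (T : ModuleCat.{0} Λ) : Prop :=
  Module.Finite Λ T ∧ (∃ n, idLE Λ T n) ∧ (∀ i, 1 ≤ i → extZero T T i) ∧
    ∃ E : ModuleCat.{0} Λ, IsInjCogen Λ E ∧ FinResByAdd Λ T E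

/-- `T` is a strong cotilting module: the modules of finite injective dimension are
exactly the ones with a finite `add T`-resolution. -/
def StrongCotilting (T : ModuleCat.{0} Λ) : Prop :=
  Cotilting Λ T ∧ ∀ X : ModuleCat.{0} Λ, Module.Finite Λ X →
    ((∃ m, idLE Λ X m) ↔ FinResByAdd Λ T X)

/-- The subcategory `^⊥Λ` of f.g. modules `X` with `Ext^i(X,Λ) = 0` for all `i ≥ 1`. -/
def perpLam : Set (ModuleCat.{0} Λ) :=
  {X | Module.Finite Λ X ∧ ∀ i, 1 ≤ i → extZero X (ModuleCat.of Λ Λ) i}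

end Paper

/-!
A nonzero map `I⁰ → S` onto the simple projective module `S` splits, so `S` is a summand of
the injective `I⁰`; conversely an injective `S` receives the extension along `Λ ↪ I⁰` of a
nonzero map `Λ → S`. If `Hom(I⁰, S) = 0`, then, `I⁰, …, I^{n-1}` being projective,
`0 → Λ → I⁰ → ⋯ → I^{n-1} → Ω^{-n}Λ → 0` is a projective resolution, and
`Ext^n(Ω^{-n}Λ, S) = coker(Hom(I⁰, S) → Hom(Λ, S)) = Hom(Λ, S) ≠ 0`; hence `id S ≥ n`,
while `id S ≤ gl.dim Λ = n`.
-/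
namespace Paper

section

variable {Λ : Type} [Ring Λ]

lemma extZero_succ_iff {N : ModuleCat.{0} Λ} (P : ProjectiveResolution N) (S : ModuleCat.{0} Λ)
    (i : ℕ) :
    extZero N S (i + 1) ↔
      ∀ f : P.complex.X (i + 1) ⟶ S, P.complex.d (i + 2) (i + 1) ≫ f = 0 →
        ∃ g : P.complex.X i ⟶ S, P.complex.d (i + 1) i ≫ g = f := by
  rw [extZero, ← ModuleCat.isZero_iff_subsingleton, (P.isoExt (i + 1) S).isZero_iff,
    ← HomologicalComplex.exactAt_iff_isZero_homology,
    HomologicalComplex.exactAt_iff' _ i (i + 1) (i + 2) (by simp) (by simp),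
    ShortComplex.moduleCat_exact_iff]
  rfl

lemma extZero_succ_of_injective (N : ModuleCat.{0} Λ) {S : ModuleCat.{0} Λ} [Injective S]
    (i : ℕ) : extZero N S (i + 1) :=
  (extZero_succ_iff (ProjectiveResolution.of N) S i).2 fun f hf =>
    ⟨_, ((ProjectiveResolution.of N).exact_succ i).comp_descToInjective f hf⟩

lemma idLE_zero_of_injective (S : ModuleCat.{0} Λ) [Injective S] : idLE Λ S 0 := by
  rintro N (_ | i) hi
  · omega
  · exact extZero_succ_of_injective N i

/-- A projective resolution `⋯ → P 1 → P 0 → N → 0` presented by its maps, with exactness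
stated elementwise as in `MinInjRes`. -/
structure ProjRes (N : ModuleCat.{0} Λ) where
  P : ℕ → ModuleCat.{0} Λ
  π : P 0 ⟶ N
  d : ∀ i : ℕ, P (i + 1) ⟶ P i
  projective : ∀ i, Projective (P i)
  surjective_π : Function.Surjective π
  range_d_zero : LinearMap.range (d 0).hom = LinearMap.ker π.hom
  range_d_succ : ∀ i, LinearMap.range (d (i + 1)).hom = LinearMap.ker (d i).hom

namespace ProjRes

variable {N : ModuleCat.{0} Λ} (D : ProjRes N)

lemma d_comp_d (i : ℕ) : D.d (i + 1) ≫ D.d i = 0 := by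
  ext x
  exact (D.range_d_succ i).le ⟨x, rfl⟩

lemma d_comp_π : D.d 0 ≫ D.π = 0 := by
  ext x
  exact D.range_d_zero.le ⟨x, rfl⟩

def complex : ChainComplex (ModuleCat.{0} Λ) ℕ := ChainComplex.of D.P D.d D.d_comp_d

lemma complex_d (i : ℕ) : D.complex.d (i + 1) i = D.d i := ChainComplex.of_d _ _ i

def toProjectiveResolution : ProjectiveResolution N where
  complex := D.complex
  projective := D.projective
  π := (ChainComplex.toSingle₀Equiv _ _).symm ⟨D.π, by rw [complex_d]; exact D.d_comp_π⟩
  quasiIso := ⟨fun n => by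
    cases n with
    | zero =>
      rw [ChainComplex.quasiIsoAt₀_iff, ShortComplex.quasiIso_iff_of_zeros']
      · refine ⟨?_, ?_⟩
        · rw [ShortComplex.moduleCat_exact_iff_range_eq_ker]
          exact D.range_d_zero
        · rw [ModuleCat.epi_iff_surjective]
          exact D.surjective_π
      all_goals rfl
    | succ n =>
      rw [quasiIsoAt_iff_exactAt']
      · rw [HomologicalComplex.exactAt_iff' _ (n + 2) (n + 1) n (by simp) (by simp),
          ShortComplex.moduleCat_exact_iff_range_eq_ker]
        change LinearMap.range (D.complex.d (n + 2) (n + 1)).hom =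
          LinearMap.ker (D.complex.d (n + 1) n).hom
        rw [complex_d, complex_d]
        exact D.range_d_succ n
      · exact ChainComplex.exactAt_succ_single_obj _ _⟩

lemma extZero_succ_iff (S : ModuleCat.{0} Λ) (i : ℕ) :
    extZero N S (i + 1) ↔
      ∀ f : D.P (i + 1) ⟶ S, D.d (i + 1) ≫ f = 0 → ∃ g : D.P i ⟶ S, D.d i ≫ g = f := by
  rw [Paper.extZero_succ_iff D.toProjectiveResolution S i]
  change (∀ f : D.P (i + 1) ⟶ S, D.complex.d (i + 2) (i + 1) ≫ f = 0 →
    ∃ g : D.P i ⟶ S, D.complex.d (i + 1) i ≫ g = f) ↔ _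
  rw [complex_d, complex_d]
  exact Iff.rfl

def ofProjective (M : ModuleCat.{0} Λ) [Projective M] : ProjRes M where
  P | 0 => M
    | _ + 1 => ModuleCat.of Λ PUnit
  π := 𝟙 M
  d _ := 0
  projective
    | 0 => inferInstance
    | _ + 1 => (ModuleCat.isZero_of_subsingleton _).projective
  surjective_π := Function.surjective_id
  range_d_zero := by simp
  range_d_succ _ := Subsingleton.elim _ _

variable {Q B : ModuleCat.{0} Λ} [Projective Q]

def shift (a : N ⟶ Q) (p : Q ⟶ B) (ha : Function.Injective a) (hp : Function.Surjective p)
    (hap : LinearMap.range a.hom = LinearMap.ker p.hom) : ProjRes B where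
  P | 0 => Q
    | i + 1 => D.P i
  π := p
  d | 0 => D.π ≫ a
    | i + 1 => D.d i
  projective
    | 0 => inferInstance
    | i + 1 => D.projective i
  surjective_π := hp
  range_d_zero := by
    rw [← hap, ModuleCat.hom_comp, LinearMap.range_comp_of_range_eq_top _
      (LinearMap.range_eq_top.2 D.surjective_π)]
  range_d_succ
    | 0 => by
      rw [D.range_d_zero, ModuleCat.hom_comp, LinearMap.ker_comp_of_ker_eq_bot _
        (LinearMap.ker_eq_bot.2 ha)]
    | i + 1 => D.range_d_succ i

lemma extZero_succ_succ_iff (D : ProjRes N) (a : N ⟶ Q) (p : Q ⟶ B) (ha : Function.Injective a)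
    (hp : Function.Surjective p) (hap : LinearMap.range a.hom = LinearMap.ker p.hom)
    (S : ModuleCat.{0} Λ) (i : ℕ) :
    extZero B S (i + 2) ↔ extZero N S (i + 1) :=
  ((D.shift a p ha hp hap).extZero_succ_iff S (i + 1)).trans (D.extZero_succ_iff S i).symm

lemma extZero_one_iff [Projective N] (a : N ⟶ Q) (p : Q ⟶ B) (ha : Function.Injective a)
    (hp : Function.Surjective p) (hap : LinearMap.range a.hom = LinearMap.ker p.hom)
    (S : ModuleCat.{0} Λ) :
    extZero B S 1 ↔ ∀ f : N ⟶ S, ∃ g : Q ⟶ S, a ≫ g = f := by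
  rw [((ofProjective N).shift a p ha hp hap).extZero_succ_iff S 0]
  refine forall_congr' fun f => ?_
  change (0 ≫ f = 0 → ∃ g, (𝟙 N ≫ a) ≫ g = f) ↔ _
  simp

end ProjRes

namespace MinInjRes

variable {M : ModuleCat.{0} Λ} (res : MinInjRes Λ M)

/-- The `j`-th cosyzygy `Ω^{-(j+1)} M`, the image of `I j ⟶ I (j + 1)`. -/
def cosyzygy (j : ℕ) : ModuleCat.{0} Λ := ModuleCat.of Λ (LinearMap.range (res.d j).hom)

def toCosyzygy (j : ℕ) : res.I j ⟶ res.cosyzygy j :=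
  ModuleCat.ofHom (res.d j).hom.rangeRestrict

def cosyzygyι (j : ℕ) : res.cosyzygy j ⟶ res.I (j + 1) := ModuleCat.ofHom (Submodule.subtype _)

lemma range_ι_eq_ker_toCosyzygy :
    LinearMap.range res.ι.hom = LinearMap.ker (res.toCosyzygy 0).hom := by
  change _ = LinearMap.ker (res.d 0).hom.rangeRestrict
  rw [LinearMap.ker_rangeRestrict, res.exact_ι]

lemma range_cosyzygyι_eq_ker_toCosyzygy (j : ℕ) :
    LinearMap.range (res.cosyzygyι j).hom = LinearMap.ker (res.toCosyzygy (j + 1)).hom := by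
  change LinearMap.range (LinearMap.range (res.d j).hom).subtype =
    LinearMap.ker (res.d (j + 1)).hom.rangeRestrict
  rw [LinearMap.ker_rangeRestrict, Submodule.range_subtype, res.exact_d]

/-- The projective resolution `0 → M → I 0 → ⋯ → I j → Ω^{-(j+1)} M → 0`. -/
def cosyzygyProjRes [Projective M] : (j : ℕ) → (∀ i ≤ j, Projective (res.I i)) →
    ProjRes (res.cosyzygy j)
  | 0, hI =>
    have := hI 0 le_rfl
    (ProjRes.ofProjective M).shift res.ι (res.toCosyzygy 0) res.mono_ι
      (LinearMap.surjective_rangeRestrict _) res.range_ι_eq_ker_toCosyzygy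
  | j + 1, hI =>
    have := hI (j + 1) le_rfl
    (cosyzygyProjRes j fun i hi => hI i (by omega)).shift (res.cosyzygyι j)
      (res.toCosyzygy (j + 1)) (Submodule.injective_subtype _)
      (LinearMap.surjective_rangeRestrict _) (res.range_cosyzygyι_eq_ker_toCosyzygy j)

lemma not_extZero_cosyzygy [Projective M] {S : ModuleCat.{0} Λ} {u : M ⟶ S}
    (hu : ∀ g : res.I 0 ⟶ S, res.ι ≫ g ≠ u) :
    ∀ j, (∀ i ≤ j, Projective (res.I i)) → ¬ extZero (res.cosyzygy j) S (j + 1)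
  | 0, hI => by
    have := hI 0 le_rfl
    rw [ProjRes.extZero_one_iff res.ι (res.toCosyzygy 0) res.mono_ι
      (LinearMap.surjective_rangeRestrict _) res.range_ι_eq_ker_toCosyzygy]
    exact fun h => (h u).elim hu
  | j + 1, hI => by
    have := hI (j + 1) le_rfl
    rw [(res.cosyzygyProjRes j fun i hi => hI i (by omega)).extZero_succ_succ_iff
      (res.cosyzygyι j) (res.toCosyzygy (j + 1)) (Submodule.injective_subtype _)
      (LinearMap.surjective_rangeRestrict _) (res.range_cosyzygyι_eq_ker_toCosyzygy j)]
    exact not_extZero_cosyzygy hu j fun i hi => hI i (by omega)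

lemma le_of_idLE [Projective M] {j : ℕ} (hI : ∀ i ≤ j, Projective (res.I i))
    {S : ModuleCat.{0} Λ} {u : M ⟶ S} (hu : ∀ g : res.I 0 ⟶ S, res.ι ≫ g ≠ u) {m : ℕ}
    (hm : idLE Λ S m) : j + 1 ≤ m := by
  by_contra! h
  exact res.not_extZero_cosyzygy hu j hI (hm _ _ h)

end MinInjRes

lemma injective_of_epi_of_projective {C : Type*} [Category C] {I S : C} [Injective I]
    [Projective S] (f : I ⟶ S) [Epi f] : Injective S :=
  (Retract.mk (Projective.factorThru (𝟙 S) f) f (Projective.factorThru_comp _ _)).injective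

lemma exists_hom_ne_zero_of_nontrivial (S : ModuleCat.{0} Λ) [Nontrivial S] :
    ∃ u : ModuleCat.of Λ Λ ⟶ S, u ≠ 0 := by
  obtain ⟨s, hs⟩ := exists_ne (0 : S)
  refine ⟨ModuleCat.ofHom (LinearMap.toSpanSingleton Λ S s), fun h => hs ?_⟩
  simpa using congr(($h).hom 1)

end

theorem projective_simple_hom_characterization_general
    (Λ : Type) [Ring Λ]
    (n : ℕ) (hn : 2 ≤ n)
    (res : MinInjRes Λ (ModuleCat.of Λ Λ))
    (hAus : ∀ i ≤ n - 1, Projective (res.I i))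
    (hgl : glDimEq Λ n)
    (S : ModuleCat.{0} Λ) (hS : IsSimpleModule Λ S) (hproj : Projective S) :
    ((∃ f : res.I 0 ⟶ S, f ≠ 0) ↔ Injective S) ∧
    ((∀ f : res.I 0 ⟶ S, f = 0) ↔ idEq Λ S n) := by
  have : Nontrivial S := IsSimpleModule.nontrivial Λ S
  have : Projective (ModuleCat.of Λ Λ) := (IsProjective.iff_projective Λ).mp inferInstance
  obtain ⟨u, hu⟩ := exists_hom_ne_zero_of_nontrivial S
  have injective_of_ne_zero : (∃ f : res.I 0 ⟶ S, f ≠ 0) → Injective S := fun ⟨f, hf⟩ =>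
    have : Epi f := (ModuleCat.epi_iff_surjective f).2
      (LinearMap.surjective_of_ne_zero fun h => hf (ModuleCat.hom_ext h))
    have := res.injective 0
    injective_of_epi_of_projective f
  have ne_zero_of_injective : Injective S → ∃ f : res.I 0 ⟶ S, f ≠ 0 := fun _ =>
    have : Mono res.ι := (ModuleCat.mono_iff_injective _).2 res.mono_ι
    ⟨Injective.factorThru u res.ι, fun h => hu <| by
      rw [← Injective.comp_factorThru u res.ι, h, comp_zero]⟩
  refine ⟨⟨injective_of_ne_zero, ne_zero_of_injective⟩,
    fun hzero => ⟨fun N i hi => hgl.1 N S i hi, fun m hm => ?_⟩, fun hid => ?_⟩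
  · have := res.le_of_idLE hAus (u := u) (fun g => by rw [hzero g, comp_zero]; exact hu.symm) hm
    omega
  · by_contra! h
    have := injective_of_ne_zero h
    have := hid.2 0 (idLE_zero_of_injective S)
    omega

/-- Proposition 2.6(2): over an `(n−1)`-Auslander algebra with `gl.dim Λ = n`, for a
projective simple module `S`, `Hom(I^0(Λ), S) ≠ 0` iff `S` is injective, and
`Hom(I^0(Λ), S) = 0` iff `id S = n`. -/
theorem projective_simple_hom_characterization
    (R₀ : Type) [CommRing R₀] [IsArtinianRing R₀]
    (Λ : Type) [Ring Λ] [Algebra R₀ Λ] [Module.Finite R₀ Λ]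
    (n : ℕ) (hn : 2 ≤ n)
    (res : MinInjRes Λ (ModuleCat.of Λ Λ))
    (hAus : ∀ i ≤ n - 1, Projective (res.I i))
    (hgl : glDimEq Λ n)
    (S : ModuleCat.{0} Λ) (hS : IsSimpleModule Λ S) (hproj : Projective S) :
    ((∃ f : res.I 0 ⟶ S, f ≠ 0) ↔ Injective S) ∧
    ((∀ f : res.I 0 ⟶ S, f = 0) ↔ idEq Λ S n) :=
  projective_simple_hom_characterization_general Λ n hn res hAus hgl S hS hproj

end Paper
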